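/- arXiv:2106.12133 — 8 statements merged into one kernel-verified Lean document; each statement's English description precedes it below -/
import Mathlib

section
/- Let φ > 0, Ā > 0, and c ∈ (0, φ/(2Ā)). The function g(B') = (B'/(2Ā))·φ − c·B' for B' ∈ [0, Ā] extended by g(B') = φ·(1 − Ā/(2B')) − c·B' for B' > Ā attains its maximum over B' ≥ 0 at B'* = sqrt(Āφ/(2c)), and the maximum value equals φ − sqrt(2cφĀ). -/
/-- In GL(Ā, ∞, c) with 0 < c < φ/(2Ā), the opponent's objective
g(B') = φ·B'/(2Ā) − c·B' on [0, Ā] and g(B') = φ(1 − Ā/(2B')) − c·B' for B' > Ā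
is maximized over B' ≥ 0 at B'* = √(Āφ/(2c)), with value φ − √(2cφĀ). -/
theorem stmt_0 (φ A c : ℝ) (hφ : 0 < φ) (hA : 0 < A) (hc : 0 < c)
    (hcu : c < φ / (2 * A))
    (g : ℝ → ℝ)
    (hg1 : ∀ B', B' ≤ A → g B' = B' / (2 * A) * φ - c * B')
    (hg2 : ∀ B', A < B' → g B' = φ * (1 - A / (2 * B')) - c * B') :
    IsMaxOn g (Set.Ici 0) (Real.sqrt (A * φ / (2 * c))) ∧
      g (Real.sqrt (A * φ / (2 * c))) = φ - Real.sqrt (2 * c * φ * A) := by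
  have hcA : 2 * c * A < φ := by
    have hcu' := hcu
    rw [lt_div_iff₀ (by positivity : (0:ℝ) < 2 * A)] at hcu'
    linarith
  set s := Real.sqrt (A * φ / (2 * c)) with hsdef
  have harg : 0 ≤ A * φ / (2 * c) := by positivity
  have hs0 : 0 ≤ s := Real.sqrt_nonneg _
  have hs2 : s ^ 2 = A * φ / (2 * c) := Real.sq_sqrt harg
  have hkey : 2 * c * s ^ 2 = A * φ := by
    rw [hs2]; field_simp
  have hsA : A < s := by
    rw [hsdef]
    rw [show (A * φ / (2 * c)) = (A * φ / (2 * c)) from rfl]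
    apply (Real.lt_sqrt hA.le).mpr
    rw [lt_div_iff₀ (by positivity : (0:ℝ) < 2 * c)]
    nlinarith
  set t := Real.sqrt (2 * c * φ * A) with htdef
  have ht0 : 0 ≤ t := Real.sqrt_nonneg _
  have hteq : t = 2 * c * s := by
    rw [htdef, show 2 * c * φ * A = (2 * c * s) ^ 2 by nlinarith]
    exact Real.sqrt_sq (by positivity)
  have hspos : 0 < s := lt_trans hA hsA
  have hgs : g s = φ - t := by
    rw [hg2 s hsA, hteq]
    have h2s : (2 * s) ≠ 0 := by positivity
    field_simp
    nlinarith
  refine ⟨?_, hgs⟩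
  intro B' hB'
  simp only [Set.mem_Ici] at hB'
  simp only [Set.mem_setOf_eq, hgs]
  rcases le_or_gt B' A with h | h
  · rw [hg1 B' h]
    have hfac : 0 ≤ φ / (2 * A) - c := by linarith
    have h1 : B' / (2 * A) * φ - c * B' ≤ A * (φ / (2 * A) - c) := by
      have : B' / (2 * A) * φ - c * B' = B' * (φ / (2 * A) - c) := by ring
      rw [this]
      exact mul_le_mul_of_nonneg_right h hfac
    have hAe : A * (φ / (2 * A) - c) = φ / 2 - c * A := by field_simp
    have ht_le : t ≤ φ / 2 + c * A := by
      rw [htdef]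
      calc Real.sqrt (2 * c * φ * A) ≤ Real.sqrt ((φ / 2 + c * A) ^ 2) :=
            Real.sqrt_le_sqrt (by nlinarith [sq_nonneg (φ / 2 - c * A)])
        _ = φ / 2 + c * A := Real.sqrt_sq (by positivity)
    linarith
  · rw [hg2 B' h]
    have hB2 : (0:ℝ) < 2 * B' := by linarith
    have ht2 : t ^ 2 = 2 * c * φ * A := Real.sq_sqrt (by positivity)
    have key : t * (2 * B') ≤ φ * A + c * B' * (2 * B') := by
      nlinarith [sq_nonneg (t - 2 * c * B')]
    have hsuff : t ≤ φ * A / (2 * B') + c * B' := by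
      rw [← sub_le_iff_le_add, le_div_iff₀ hB2]
      nlinarith
    have : φ * (1 - A / (2 * B')) = φ - φ * A / (2 * B') := by ring
    linarith [this ▸ le_refl (φ * (1 - A / (2 * B')))]
end

section
/- Let p ∈ (0,1), Ā > 0, φ > 0, and c ∈ [p²φ/(2Ā), φ/(2Ā)). Set s = sqrt(2cĀ/φ), so s ∈ [p, 1). Then y = (2cĀ/φ)/(2s − p) satisfies the equation y·(sqrt(y − p) + sqrt(y))² = 2cĀ/φ, and moreover y ∈ [p, 1]. -/
/-! With `s = √(2cĀ/φ)` and `d = 2s - p`, the candidate is `y = s² / d`, and then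
`y - p = (s - p)² / d`. Hence `√(y - p) + √y = (2s - p) / √d = √d`, so that
`y (√(y - p) + √y)² = y d = s²`. The bounds `p ≤ y ≤ 1` reduce to `(s - p)² ≥ 0` and
`s (1 - s) ≥ 0`. -/

namespace Real

variable {s p : ℝ}

theorem sqrt_mem_Ico_of_sq_le_of_lt_one {T : ℝ} (hpT : p ^ 2 ≤ T) (hT : T < 1) :
    √T ∈ Set.Ico p 1 :=
  ⟨le_sqrt_of_sq_le hpT, (sqrt_lt' one_pos).2 (by rwa [one_pow])⟩

theorem sq_div_two_mul_sub_mul_sqrt_sub_add_sqrt_sq (hs : 0 < s) (hps : p ≤ s) :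
    s ^ 2 / (2 * s - p) * (√(s ^ 2 / (2 * s - p) - p) + √(s ^ 2 / (2 * s - p))) ^ 2 = s ^ 2 := by
  have hd : 0 < 2 * s - p := by linarith
  have hsub : s ^ 2 / (2 * s - p) - p = (s - p) ^ 2 / (2 * s - p) := by
    rw [eq_div_iff hd.ne', sub_mul, div_mul_cancel₀ _ hd.ne']
    ring
  have hsum : √((s - p) ^ 2 / (2 * s - p)) + √(s ^ 2 / (2 * s - p)) = √(2 * s - p) := by
    rw [sqrt_div' _ hd.le, sqrt_div' _ hd.le, sqrt_sq (sub_nonneg.2 hps),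
      sqrt_sq hs.le, ← add_div, show s - p + s = 2 * s - p by ring, div_sqrt]
  rw [hsub, hsum, sq_sqrt hd.le, div_mul_cancel₀ _ hd.ne']

theorem le_sq_div_two_mul_sub (hs : 0 < s) (hps : p ≤ s) : p ≤ s ^ 2 / (2 * s - p) := by
  rw [le_div_iff₀ (by linarith)]
  nlinarith [sq_nonneg (s - p)]

theorem sq_div_two_mul_sub_le_one (hs : 0 < s) (hps : p ≤ s) (hs1 : s ≤ 1) :
    s ^ 2 / (2 * s - p) ≤ 1 := by
  rw [div_le_one (by linarith)]
  nlinarith [mul_nonneg hs.le (sub_nonneg.2 hs1)]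

end Real

/-- For c ∈ [p²φ/(2Ā), φ/(2Ā)), with s = √(2cĀ/φ) ∈ [p,1),
the value y = (2cĀ/φ)/(2s − p) solves y(√(y−p)+√y)² = 2cĀ/φ and y ∈ [p,1]. -/
theorem stmt_3 (p A φ c : ℝ) (hp : p ∈ Set.Ioo (0 : ℝ) 1) (hA : 0 < A) (hφ : 0 < φ)
    (hcl : p ^ 2 * φ / (2 * A) ≤ c) (hcu : c < φ / (2 * A)) :
    Real.sqrt (2 * c * A / φ) ∈ Set.Ico p 1 ∧
    (let s := Real.sqrt (2 * c * A / φ)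
     let y := (2 * c * A / φ) / (2 * s - p)
     y * (Real.sqrt (y - p) + Real.sqrt y) ^ 2 = 2 * c * A / φ ∧ y ∈ Set.Icc p 1) := by
  have hpT : p ^ 2 ≤ 2 * c * A / φ := by
    rw [div_le_iff₀ (by positivity)] at hcl
    rw [le_div_iff₀ hφ]
    linarith
  have hT1 : 2 * c * A / φ < 1 := by
    rw [lt_div_iff₀ (by positivity)] at hcu
    rw [div_lt_one hφ]
    linarith
  have hs := Real.sqrt_mem_Ico_of_sq_le_of_lt_one hpT hT1
  refine ⟨hs, ?_⟩
  intro s y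
  have hs0 : 0 < s := hp.1.trans_le hs.1
  have hT : 2 * c * A / φ = s ^ 2 := (Real.sq_sqrt ((sq_nonneg p).trans hpT)).symm
  simp only [y, hT]
  exact ⟨Real.sq_div_two_mul_sub_mul_sqrt_sub_add_sqrt_sq hs0 hs.1,
    Real.le_sq_div_two_mul_sub hs0 hs.1, Real.sq_div_two_mul_sub_le_one hs0 hs.1 hs.2.le⟩
end

section
/- Let φ > 0, Ā > 0, c ∈ (0, φ/(2Ā)). For p ∈ [0,1], define Π(p) = pφ/2 + sqrt(cφĀ/2) if p ≤ sqrt(2cĀ/φ), and Π(p) = sqrt(cφĀ/2) otherwise (the complete-information payoff). Then the maximum of Π over p ∈ [0,1] is attained at p* = sqrt(2cĀ/φ), with maximum value sqrt(2cφĀ), which equals exactly twice sqrt(cφĀ/2). -/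
/-- For c ∈ (0, φ/(2Ā)), Π(p) = pφ/2 + √(cφĀ/2) if p ≤ √(2cĀ/φ),
and Π(p) = √(cφĀ/2) otherwise, is maximized over p ∈ [0,1] at p* = √(2cĀ/φ),
with maximum value √(2cφĀ) = 2√(cφĀ/2). -/
theorem stmt_4 (φ A c : ℝ) (hφ : 0 < φ) (hA : 0 < A) (hc : 0 < c)
    (hcu : c < φ / (2 * A))
    (Pi : ℝ → ℝ)
    (hPi1 : ∀ p, p ≤ Real.sqrt (2 * c * A / φ) →
      Pi p = p * φ / 2 + Real.sqrt (c * φ * A / 2))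
    (hPi2 : ∀ p, Real.sqrt (2 * c * A / φ) < p → Pi p = Real.sqrt (c * φ * A / 2)) :
    IsMaxOn Pi (Set.Icc 0 1) (Real.sqrt (2 * c * A / φ)) ∧
      Pi (Real.sqrt (2 * c * A / φ)) = Real.sqrt (2 * c * φ * A) ∧
      Real.sqrt (2 * c * φ * A) = 2 * Real.sqrt (c * φ * A / 2) := by
  set s := Real.sqrt (2 * c * A / φ) with hs
  have hs0 : 0 ≤ s := Real.sqrt_nonneg _
  have hkey : s * φ / 2 = Real.sqrt (c * φ * A / 2) := by
    have h1 : c * φ * A / 2 = (2 * c * A / φ) * (φ / 2) ^ 2 := by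
      field_simp
    rw [h1, Real.sqrt_mul (by positivity), Real.sqrt_sq (by positivity)]
    ring
  have heq2 : Real.sqrt (2 * c * φ * A) = 2 * Real.sqrt (c * φ * A / 2) := by
    rw [show (2 : ℝ) * Real.sqrt (c * φ * A / 2) = Real.sqrt 4 * Real.sqrt (c * φ * A / 2) by
      rw [show (4 : ℝ) = 2 ^ 2 by norm_num, Real.sqrt_sq (by norm_num)],
      ← Real.sqrt_mul (by norm_num)]
    ring_nf
  have hPis : Pi s = Real.sqrt (2 * c * φ * A) := by
    rw [hPi1 s le_rfl, hkey, heq2]; ring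
  refine ⟨?_, hPis, heq2⟩
  intro p hp
  simp only [Set.mem_Icc] at hp
  rw [Set.mem_setOf_eq, hPis, heq2]
  rcases le_or_gt p s with h | h
  · rw [hPi1 p h]
    have : p * φ / 2 ≤ s * φ / 2 := by nlinarith
    rw [hkey] at this
    linarith
  · rw [hPi2 p h]
    have := Real.sqrt_nonneg (c * φ * A / 2)
    linarith
end

section
/- Let p ∈ (0,1), c > 0, φ > 0, Ā > 0 with c ∈ [p²φ/(2Ā), φ/(2Ā)). Define A₁* = φ·(2·sqrt(2cĀ/φ) − p)/(2c) and A₂* = (Ā − p·A₁*)/(1−p). Then p·A₁* + (1−p)·A₂* = Ā and A₂* ≥ 0, and p·φ + sqrt(cφ(1−p)A₂*/2) = pφ/2 + sqrt(cφĀ/2). -/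
/-! Put `s = √(2cĀ/φ)`, so that `Ā = φ s² / (2c)` and `A₁* = φ (2s − p) / (2c)`. Completing the
square gives `Ā − p A₁* = φ (s − p)² / (2c)`, and the lower bound on `c` says exactly `p ≤ s`.
Both square roots in the payoff are then roots of perfect squares, `φ (s − p) / 2` and `φ s / 2`,
and the identity is linear in them. -/

open Real

lemma mul_add_one_sub_mul_sub_div_one_sub {K : Type*} [Field K] {p : K} (hp : p ≠ 1) (x y : K) :
    p * x + (1 - p) * ((y - p * x) / (1 - p)) = y := by
  rw [mul_div_cancel₀ _ (sub_ne_zero.2 hp.symm)]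
  ring

section

variable {p c φ s : ℝ}

lemma mul_sq_div_sub_mul_eq_mul_sub_sq_div (hc : c ≠ 0) :
    φ * s ^ 2 / (2 * c) - p * (φ * (2 * s - p) / (2 * c)) = φ * (s - p) ^ 2 / (2 * c) := by
  field_simp
  ring

lemma sqrt_mul_mul_sq_div_eq (hc : 0 < c) (hφ : 0 ≤ φ) (hs : 0 ≤ s) :
    √(c * φ * (φ * s ^ 2 / (2 * c)) / 2) = φ * s / 2 := by
  rw [show c * φ * (φ * s ^ 2 / (2 * c)) / 2 = (φ * s / 2) ^ 2 by field_simp]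
  exact sqrt_sq (by positivity)

lemma mul_sq_sqrt_div_eq {A : ℝ} (hc : 0 < c) (hφ : 0 < φ) (hA : 0 ≤ A) :
    φ * √(2 * c * A / φ) ^ 2 / (2 * c) = A := by
  rw [sq_sqrt (by positivity)]
  field_simp

lemma le_sqrt_of_sq_mul_div_le {A : ℝ} (hφ : 0 < φ) (hA : 0 < A) (h : p ^ 2 * φ / (2 * A) ≤ c) :
    p ≤ √(2 * c * A / φ) := by
  refine (le_abs_self p).trans (abs_le_sqrt ?_)
  rw [le_div_iff₀ hφ]
  rw [div_le_iff₀ (by positivity)] at h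
  linarith

end

theorem stmt_5_general (p c φ A : ℝ) (hp : p ∈ Set.Ioo (0 : ℝ) 1) (hc : 0 < c)
    (hφ : 0 < φ) (hA : 0 < A)
    (hcl : p ^ 2 * φ / (2 * A) ≤ c)
    (A₁ A₂ : ℝ)
    (hA₁ : A₁ = φ * (2 * Real.sqrt (2 * c * A / φ) - p) / (2 * c))
    (hA₂ : A₂ = (A - p * A₁) / (1 - p)) :
    p * A₁ + (1 - p) * A₂ = A ∧ 0 ≤ A₂ ∧
      p * φ + Real.sqrt (c * φ * (1 - p) * A₂ / 2) =
        p * φ / 2 + Real.sqrt (c * φ * A / 2) := by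
  have h1p : 0 < 1 - p := sub_pos.2 hp.2
  have hps : p ≤ √(2 * c * A / φ) := le_sqrt_of_sq_mul_div_le hφ hA hcl
  set s := √(2 * c * A / φ)
  have hAs : A = φ * s ^ 2 / (2 * c) := (mul_sq_sqrt_div_eq hc hφ hA.le).symm
  have hsplit : p * A₁ + (1 - p) * A₂ = A := by
    rw [hA₂]
    exact mul_add_one_sub_mul_sub_div_one_sub hp.2.ne _ _
  have hrest : (1 - p) * A₂ = φ * (s - p) ^ 2 / (2 * c) := by
    rw [← mul_sq_div_sub_mul_eq_mul_sub_sq_div hc.ne', ← hAs, ← hA₁]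
    linarith
  refine ⟨hsplit, (mul_nonneg_iff_of_pos_left h1p).1 (hrest ▸ by positivity), ?_⟩
  rw [show c * φ * (1 - p) * A₂ / 2 = c * φ * ((1 - p) * A₂) / 2 by ring, hrest,
    sqrt_mul_mul_sq_div_eq hc hφ.le (sub_nonneg.2 hps), hAs,
    sqrt_mul_mul_sq_div_eq hc hφ.le (hp.1.le.trans hps)]
  ring

/-- With A₁* = φ(2√(2cĀ/φ) − p)/(2c) and A₂* = (Ā − pA₁*)/(1−p),
we have pA₁* + (1−p)A₂* = Ā, A₂* ≥ 0, and
pφ + √(cφ(1−p)A₂*/2) = pφ/2 + √(cφĀ/2). -/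
theorem stmt_5 (p c φ A : ℝ) (hp : p ∈ Set.Ioo (0 : ℝ) 1) (hc : 0 < c)
    (hφ : 0 < φ) (hA : 0 < A)
    (hcl : p ^ 2 * φ / (2 * A) ≤ c) (hcu : c < φ / (2 * A))
    (A₁ A₂ : ℝ)
    (hA₁ : A₁ = φ * (2 * Real.sqrt (2 * c * A / φ) - p) / (2 * c))
    (hA₂ : A₂ = (A - p * A₁) / (1 - p)) :
    p * A₁ + (1 - p) * A₂ = A ∧ 0 ≤ A₂ ∧
      p * φ + Real.sqrt (c * φ * (1 - p) * A₂ / 2) =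
        p * φ / 2 + Real.sqrt (c * φ * A / 2) :=
  stmt_5_general p c φ A hp hc hφ hA hcl A₁ A₂ hA₁ hA₂
end

section
/- Let p ∈ (0,1), γ₁ > 1, γ₂ ∈ (0, γ₁]. Define σ₂ = (1 − 1/γ₁)·sqrt((γ₁/((1−p)γ₂))/(p + (1−p)γ₂/γ₁)) and σ₁ = (1 − (1−p)σ₂γ₂)/(p·γ₁). Then p·σ₁ < 1. -/
/-- With σ₂ = (1 − 1/γ₁)√((γ₁/((1−p)γ₂))/(p + (1−p)γ₂/γ₁)) and
σ₁ = (1 − (1−p)σ₂γ₂)/(pγ₁), it holds that pσ₁ < 1 whenever γ₁ > 1. -/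
theorem stmt_7 (p γ₁ γ₂ : ℝ) (hp : p ∈ Set.Ioo (0 : ℝ) 1) (hγ₁ : 1 < γ₁)
    (hγ₂ : γ₂ ∈ Set.Ioc (0 : ℝ) γ₁)
    (σ₁ σ₂ : ℝ)
    (hσ₂ : σ₂ = (1 - 1 / γ₁) *
      Real.sqrt ((γ₁ / ((1 - p) * γ₂)) / (p + (1 - p) * γ₂ / γ₁)))
    (hσ₁ : σ₁ = (1 - (1 - p) * σ₂ * γ₂) / (p * γ₁)) :
    p * σ₁ < 1 := by
  obtain ⟨hp0, hp1⟩ := hp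
  obtain ⟨hγ₂0, _⟩ := hγ₂
  have hσ₂0 : 0 ≤ σ₂ := by
    rw [hσ₂]
    apply mul_nonneg
    · have : 1 / γ₁ ≤ 1 := by
        rw [div_le_one (by linarith)]; linarith
      linarith
    · exact Real.sqrt_nonneg _
  have hterm : 0 ≤ (1 - p) * σ₂ * γ₂ :=
    mul_nonneg (mul_nonneg (by linarith) hσ₂0) (le_of_lt hγ₂0)
  have hps : p * σ₁ = (1 - (1 - p) * σ₂ * γ₂) / γ₁ := by
    rw [hσ₁]; field_simp
  rw [hps, div_lt_one (by linarith)]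
  linarith
end

section
/- Let p ∈ (0,1), and let γ₁ > 2, γ₂ > 0. The multiplier σ₁ = (1 − (1−p)σ₂γ₂)/(pγ₁) with σ₂ = (1 − 1/γ₁)·sqrt((γ₁/((1−p)γ₂))/(p + (1−p)γ₂/γ₁)) is strictly positive if and only if γ₂ < p/((1−p)(γ₁ − 2)). -/
set_option maxHeartbeats 1000000 in
/-- Positivity of σ₁ in Case 2: for γ₁ > 2, γ₂ > 0,
σ₁ > 0 ↔ γ₂ < p/((1−p)(γ₁ − 2)). -/
theorem stmt_8 (p γ₁ γ₂ : ℝ) (hp : p ∈ Set.Ioo (0 : ℝ) 1) (hγ₁ : 2 < γ₁)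
    (hγ₂ : 0 < γ₂)
    (σ₁ σ₂ : ℝ)
    (hσ₂ : σ₂ = (1 - 1 / γ₁) *
      Real.sqrt ((γ₁ / ((1 - p) * γ₂)) / (p + (1 - p) * γ₂ / γ₁)))
    (hσ₁ : σ₁ = (1 - (1 - p) * σ₂ * γ₂) / (p * γ₁)) :
    0 < σ₁ ↔ γ₂ < p / ((1 - p) * (γ₁ - 2)) := by
  obtain ⟨hp0, hp1⟩ := hp
  have hq : 0 < 1 - p := by linarith
  have hγ₁0 : 0 < γ₁ := by linarith
  have hD : 0 < p + (1 - p) * γ₂ / γ₁ := by positivity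
  set R : ℝ := (γ₁ / ((1 - p) * γ₂)) / (p + (1 - p) * γ₂ / γ₁) with hR
  have hRpos : 0 < R := by
    apply div_pos (div_pos hγ₁0 (by positivity)) hD
  have hRval : R = γ₁ ^ 2 / ((1 - p) * γ₂ * (p * γ₁ + (1 - p) * γ₂)) := by
    rw [hR]
    field_simp
  clear_value R
  set t : ℝ := (1 - p) * σ₂ * γ₂ with ht
  clear_value t
  have hc : 0 < 1 - 1 / γ₁ := by
    have : 1 / γ₁ < 1 := by
      rw [div_lt_one hγ₁0]; linarith
    linarith
  have htnn : 0 ≤ t := by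
    rw [ht, hσ₂]
    positivity
  have ht2 : t ^ 2 = ((1 - 1 / γ₁) * (1 - p) * γ₂) ^ 2 * R := by
    rw [ht, hσ₂]
    rw [show ((1-p) * ((1 - 1/γ₁) * Real.sqrt R) * γ₂)^2
      = ((1 - 1/γ₁) * (1-p) * γ₂)^2 * (Real.sqrt R)^2 by ring]
    rw [Real.sq_sqrt hRpos.le]
  have key : t < 1 ↔ γ₂ < p / ((1 - p) * (γ₁ - 2)) := by
    rw [show (t < 1 ↔ t ^ 2 < 1) from ?_]
    · rw [ht2, hRval]
      have hden : 0 < (1 - p) * γ₂ * (p * γ₁ + (1 - p) * γ₂) := by positivity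
      rw [show ((1 - 1 / γ₁) * (1 - p) * γ₂) ^ 2 * (γ₁ ^ 2 / ((1 - p) * γ₂ * (p * γ₁ + (1 - p) * γ₂)))
        = (((1 - 1 / γ₁) * (1 - p) * γ₂) ^ 2 * γ₁ ^ 2) / ((1 - p) * γ₂ * (p * γ₁ + (1 - p) * γ₂)) by ring]
      rw [div_lt_one hden]
      have hd2 : 0 < (1 - p) * (γ₁ - 2) := by
        apply mul_pos hq; linarith
      rw [lt_div_iff₀ hd2]
      constructor
      · intro h
        have hexp : ((1 - 1 / γ₁) * (1 - p) * γ₂) ^ 2 * γ₁ ^ 2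
            = ((γ₁ - 1) * (1 - p) * γ₂) ^ 2 := by
          field_simp
        rw [hexp] at h
        nlinarith [sq_nonneg ((1-p)*γ₂), mul_pos hq hγ₂]
      · intro h
        have hexp : ((1 - 1 / γ₁) * (1 - p) * γ₂) ^ 2 * γ₁ ^ 2
            = ((γ₁ - 1) * (1 - p) * γ₂) ^ 2 := by
          field_simp
        rw [hexp]
        nlinarith [mul_pos hq hγ₂, mul_pos (mul_pos hq hγ₂) hγ₁0]
    · constructor
      · intro h; nlinarith
      · intro h; nlinarith
  have hpg : 0 < p * γ₁ := mul_pos hp0 hγ₁0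
  rw [hσ₁, div_pos_iff]
  constructor
  · rintro (⟨h1, _⟩ | ⟨_, h2⟩)
    · exact key.mp (by linarith)
    · linarith
  · intro h
    have h1 : t < 1 := key.mpr h
    left
    exact ⟨by linarith, hpg⟩
end

section
/- Let p ∈ (0,1), A₁ > 0, A₂ = (1−p)A₁/(2−p), and B with (2−p)B < A₁ < (2 + p/(1−p))B. Set λ_B = (2−p)/(2A₁). Then the interval ( (B/A₁)(2 + p/(1−p) − A₁/B) / (p(1 + p/(1−p))), (B/A₁)(2 + p/(1−p)) / (p(2 + p/(1−p) + (1−p)/p)) ) is nonempty, and for σ₁ in this interval with σ₂ = (B − pσ₁A₁)/((1−p)A₂), the constraints pσ₁ + (1−p)σ₂ < 1 and 0 < σ₁ ≤ σ₂ hold. -/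
/-- Case 3 multipliers: with A₂ = (1−p)A₁/(2−p),
(2−p)B < A₁ < (2 + p/(1−p))B and λ_B = (2−p)/(2A₁), the stated interval for σ₁
is nonempty, and every σ₁ in it, with σ₂ = (B − pσ₁A₁)/((1−p)A₂), satisfies
pσ₁ + (1−p)σ₂ < 1 and 0 < σ₁ ≤ σ₂. -/
theorem stmt_16 (p A₁ A₂ B lamB : ℝ) (hp : p ∈ Set.Ioo (0 : ℝ) 1) (hA₁ : 0 < A₁)
    (hA₂ : A₂ = (1 - p) * A₁ / (2 - p)) (hB : 0 < B)
    (hBl : (2 - p) * B < A₁) (hBu : A₁ < (2 + p / (1 - p)) * B)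
    (hlamB : lamB = (2 - p) / (2 * A₁)) :
    (B / A₁) * (2 + p / (1 - p) - A₁ / B) / (p * (1 + p / (1 - p))) <
      (B / A₁) * (2 + p / (1 - p)) / (p * (2 + p / (1 - p) + (1 - p) / p)) ∧
    ∀ σ₁ ∈ Set.Ioo ((B / A₁) * (2 + p / (1 - p) - A₁ / B) / (p * (1 + p / (1 - p))))
        ((B / A₁) * (2 + p / (1 - p)) / (p * (2 + p / (1 - p) + (1 - p) / p))),
      p * σ₁ + (1 - p) * ((B - p * σ₁ * A₁) / ((1 - p) * A₂)) < 1 ∧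
      0 < σ₁ ∧ σ₁ ≤ (B - p * σ₁ * A₁) / ((1 - p) * A₂) := by
  obtain ⟨hp0, hp1⟩ := hp
  have h1p : 0 < 1 - p := by linarith
  have h2p : 0 < 2 - p := by linarith
  have hA₁' : A₁ ≠ 0 := ne_of_gt hA₁
  have hB' : B ≠ 0 := ne_of_gt hB
  have hp' : p ≠ 0 := ne_of_gt hp0
  have h1p' : (1 - p) ≠ 0 := ne_of_gt h1p
  have h2p' : (2 - p) ≠ 0 := ne_of_gt h2p
  -- simplify the two bounds
  have hL : (B / A₁) * (2 + p / (1 - p) - A₁ / B) / (p * (1 + p / (1 - p)))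
      = ((2 - p) * (B / A₁) - (1 - p)) / p := by
    field_simp
    ring
  have hU : (B / A₁) * (2 + p / (1 - p)) / (p * (2 + p / (1 - p) + (1 - p) / p))
      = (2 - p) * (B / A₁) := by
    have hd : p * (2 + p / (1 - p) + (1 - p) / p) ≠ 0 := by
      have : p * (2 + p / (1 - p) + (1 - p) / p) = 1 / (1 - p) := by
        field_simp
        ring
      rw [this]
      positivity
    field_simp
    ring
  set k : ℝ := (2 - p) * (B / A₁) with hk
  have hkA : k * A₁ = (2 - p) * B := by
    rw [hk]
    field_simp
  -- translated hypotheses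
  have ht1 : k < 1 := by
    have : (2 - p) * B / A₁ < 1 := (div_lt_one hA₁).mpr hBl
    rw [hk, ← mul_div_assoc]
    exact this
  have ht2 : 1 - p < k := by
    have hBu' : (1 - p) * A₁ < (2 - p) * B := by
      have he : (2 + p / (1 - p)) = (2 - p) / (1 - p) := by field_simp; ring
      rw [he] at hBu
      rw [div_mul_eq_mul_div, lt_div_iff₀ h1p] at hBu
      nlinarith
    have : 1 - p < (2 - p) * B / A₁ := (lt_div_iff₀ hA₁).mpr (by nlinarith)
    rw [hk, ← mul_div_assoc]
    exact this
  rw [hL, hU]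
  constructor
  · rw [div_lt_iff₀ hp0]
    nlinarith
  · intro σ₁ hσ
    obtain ⟨hσl, hσu⟩ := hσ
    rw [div_lt_iff₀ hp0] at hσl
    -- key polynomial facts
    have hσl' : (2 - p) * B - (1 - p) * A₁ < p * σ₁ * A₁ := by
      have h := mul_lt_mul_of_pos_right hσl hA₁
      nlinarith [hkA]
    have hσu' : σ₁ * A₁ < (2 - p) * B := by
      have h := mul_lt_mul_of_pos_right hσu hA₁
      nlinarith [hkA]
    have hσpos : 0 < σ₁ := by
      have : 0 < k - (1 - p) := by linarith
      nlinarith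
    refine ⟨?_, hσpos, ?_⟩
    · have e1 : 1 - (p * σ₁ + (1 - p) * ((B - p * σ₁ * A₁) / ((1 - p) * A₂)))
          = ((1 - p) * A₁ - (2 - p) * B + p * σ₁ * A₁) / ((1 - p) * A₁) := by
        rw [hA₂]
        field_simp
        ring
      have hpos : 0 < ((1 - p) * A₁ - (2 - p) * B + p * σ₁ * A₁) / ((1 - p) * A₁) :=
        div_pos (by linarith) (mul_pos h1p hA₁)
      linarith [e1 ▸ hpos]
    · have e2 : (B - p * σ₁ * A₁) / ((1 - p) * A₂) - σ₁
          = ((2 - p) * B - σ₁ * A₁) / ((1 - p) ^ 2 * A₁) := by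
        rw [hA₂]
        field_simp
        ring
      have hpos : 0 ≤ ((2 - p) * B - σ₁ * A₁) / ((1 - p) ^ 2 * A₁) :=
        div_nonneg (by linarith) (by positivity)
      linarith [e2 ▸ hpos]
end

section
/- Let p ∈ (0,1). For γ₁ ∈ (1, 2), the inequality σ₁ ≤ σ₂, with σ₂ = (1 − 1/γ₁)·sqrt((γ₁/((1−p)γ₂))/(p + (1−p)γ₂/γ₁)) and σ₁ = (1 − (1−p)σ₂γ₂)/(pγ₁), is equivalent to γ₂ ≤ (p/(1−p))·(γ₁ − 1)²/(2 − γ₁); and for γ₁ > 2 the inequality σ₁ ≤ σ₂ holds for all γ₂ > 0. -/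
lemma key_17 (p γ₁ γ₂ σ₁ σ₂ : ℝ) (hp : 0 < p) (hp1 : p < 1) (h1 : 1 < γ₁) (h2 : 0 < γ₂)
    (hσ₂ : σ₂ = (1 - 1 / γ₁) *
          Real.sqrt ((γ₁ / ((1 - p) * γ₂)) / (p + (1 - p) * γ₂ / γ₁)))
    (hσ₁ : σ₁ = (1 - (1 - p) * σ₂ * γ₂) / (p * γ₁)) :
    (σ₁ ≤ σ₂ ↔ (1 - p) * γ₂ ≤ (γ₁ - 1) ^ 2 * (p * γ₁ + (1 - p) * γ₂)) := by
  have hq : 0 < 1 - p := by linarith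
  have hγ₁ : 0 < γ₁ := by linarith
  have hpg : 0 < p * γ₁ := by positivity
  have hsum : 0 < p * γ₁ + (1 - p) * γ₂ := by positivity
  have hqg : 0 < (1 - p) * γ₂ := by positivity
  have hc : (0:ℝ) ≤ (1 - 1 / γ₁) * ((1 - p) * γ₂ + p * γ₁) := by
    have : 0 ≤ 1 - 1 / γ₁ := by
      rw [sub_nonneg, div_le_one hγ₁]; linarith
    positivity
  have hRpos : 0 ≤ (γ₁ / ((1 - p) * γ₂)) / (p + (1 - p) * γ₂ / γ₁) := by positivity
  have step1 : σ₁ ≤ σ₂ ↔ 1 ≤ σ₂ * ((1 - p) * γ₂ + p * γ₁) := by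
    rw [hσ₁, div_le_iff₀ hpg]
    constructor <;> intro h <;> nlinarith
  have step2 : σ₂ * ((1 - p) * γ₂ + p * γ₁)
      = Real.sqrt ((γ₁ - 1) ^ 2 * (p * γ₁ + (1 - p) * γ₂) / ((1 - p) * γ₂)) := by
    rw [hσ₂, show (1 - 1 / γ₁) * Real.sqrt ((γ₁ / ((1 - p) * γ₂)) / (p + (1 - p) * γ₂ / γ₁)) *
        ((1 - p) * γ₂ + p * γ₁)
      = Real.sqrt ((γ₁ / ((1 - p) * γ₂)) / (p + (1 - p) * γ₂ / γ₁)) *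
        ((1 - 1 / γ₁) * ((1 - p) * γ₂ + p * γ₁)) by ring,
      ← Real.sqrt_sq hc, ← Real.sqrt_mul hRpos]
    congr 1
    field_simp
    ring
  rw [step1, step2, Real.one_le_sqrt, le_div_iff₀ hqg, one_mul]

/-- Constraint (v) in Case 2: with σ₂, σ₁ as in the multiplier
system, for γ₁ ∈ (1,2) the inequality σ₁ ≤ σ₂ is equivalent to
γ₂ ≤ (p/(1−p))(γ₁−1)²/(2−γ₁); and for γ₁ > 2 it holds for all γ₂ > 0. -/
theorem stmt_17 (p : ℝ) (hp : p ∈ Set.Ioo (0 : ℝ) 1) :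
    (∀ γ₁ ∈ Set.Ioo (1 : ℝ) 2, ∀ γ₂ > (0 : ℝ),
      ∀ σ₁ σ₂ : ℝ,
        σ₂ = (1 - 1 / γ₁) *
          Real.sqrt ((γ₁ / ((1 - p) * γ₂)) / (p + (1 - p) * γ₂ / γ₁)) →
        σ₁ = (1 - (1 - p) * σ₂ * γ₂) / (p * γ₁) →
        (σ₁ ≤ σ₂ ↔ γ₂ ≤ (p / (1 - p)) * (γ₁ - 1) ^ 2 / (2 - γ₁))) ∧
    (∀ γ₁ > (2 : ℝ), ∀ γ₂ > (0 : ℝ),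
      ∀ σ₁ σ₂ : ℝ,
        σ₂ = (1 - 1 / γ₁) *
          Real.sqrt ((γ₁ / ((1 - p) * γ₂)) / (p + (1 - p) * γ₂ / γ₁)) →
        σ₁ = (1 - (1 - p) * σ₂ * γ₂) / (p * γ₁) →
        σ₁ ≤ σ₂) := by
  obtain ⟨hp0, hp1⟩ := hp
  have hq : 0 < 1 - p := by linarith
  constructor
  · rintro γ₁ ⟨h1, h2'⟩ γ₂ h2 σ₁ σ₂ hσ₂ hσ₁
    rw [key_17 p γ₁ γ₂ σ₁ σ₂ hp0 hp1 h1 h2 hσ₂ hσ₁]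
    have hD : (p / (1 - p)) * (γ₁ - 1) ^ 2 / (2 - γ₁)
        = p * (γ₁ - 1) ^ 2 / ((1 - p) * (2 - γ₁)) := by
      field_simp
    rw [hD, le_div_iff₀ (by nlinarith)]
    constructor <;> intro h <;> nlinarith
  · rintro γ₁ h1 γ₂ h2 σ₁ σ₂ hσ₂ hσ₁
    rw [key_17 p γ₁ γ₂ σ₁ σ₂ hp0 hp1 (by linarith) h2 hσ₂ hσ₁]
    have h3 : (1:ℝ) ≤ (γ₁ - 1) ^ 2 := by nlinarith
    nlinarith [mul_le_mul_of_nonneg_right h3 (mul_pos hq h2).le,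
      mul_pos (mul_pos hp0 (show (0:ℝ) < γ₁ by linarith)) (show (0:ℝ) < (γ₁-1)^2 by nlinarith)]
end
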